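/- Let T be a saturated dg-category over k with a perfect t-structure cogenerated by a point system P of dimension d. Then P strongly cogenerates the t-structure if and only if P coincides with the set of isomorphism classes of simple objects of the heart H of the induced t-structure on [T]. -/

import Mathlib

/-!
Statement 0 (Toën–Vaquié, "Systèmes de points dans les dg-catégories saturées",
Proposition 2.3 (1)):

Let `T` be a triangulated dg-category over an algebraically closed field `k` of
characteristic zero, equipped with a compact t-structure.  Then for every pair of
integers `a ≤ b`, the full sub-dg-category `T̂^{[a,b]} ⊆ T̂` is stable under filtered
colimits, and the cohomology functors `H^i_t : |T̂| → Ĥ` commute with filtered colimits.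

We model the (∞-category underlying the) dg-category `T̂` of `T^op`-dg-modules by a
`k`-linear pretriangulated category `C` with all colimits; the full subcategory of
compact objects models `T`.  A t-structure on `T` is a t-structure on `C = [T̂]`
(Mathlib's `Triangulated.TStructure`), which we equip with truncation functors and the
associated cohomology functors `H^i_t`.
-/

open CategoryTheory Limits Pretriangulated Triangulated

universe v u

namespace TV

variable {C : Type u} [Category.{v} C]

/-- An object `x` of a category is compact (ω-small) if `Hom(x, -)` commutes with all
filtered colimits. -/
def IsCompactObj (x : C) : Prop :=
  ∀ (J : Type v) [SmallCategory J] [IsFiltered J] (F : J ⥤ C) (c : Cocone F),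
    IsColimit c → Nonempty (IsColimit ((coyoneda.obj (Opposite.op x)).mapCocone c))

variable [Preadditive C] [HasZeroObject C] [HasShift C ℤ]
  [∀ (n : ℤ), (shiftFunctor C n).Additive] [Pretriangulated C]

/-- Truncation data for a t-structure: truncation functors `τ_{≤n}`, `τ_{≥n}` together
with the canonical morphisms and the associated distinguished triangles
`τ_{≤n} x ⟶ x ⟶ τ_{≥n+1} x ⟶ (τ_{≤n} x)[1]`. -/
structure Truncation (t : TStructure C) where
  truncLE (n : ℤ) : C ⥤ C
  truncGE (n : ℤ) : C ⥤ C
  truncLE_le (n : ℤ) (x : C) : t.le n ((truncLE n).obj x)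
  truncGE_ge (n : ℤ) (x : C) : t.ge n ((truncGE n).obj x)
  ι (n : ℤ) : truncLE n ⟶ 𝟭 C
  π (n : ℤ) : 𝟭 C ⟶ truncGE n
  δ (n : ℤ) (x : C) : (truncGE (n + 1)).obj x ⟶ ((truncLE n).obj x)⟦(1 : ℤ)⟧
  triangle_mem (n : ℤ) (x : C) :
    Triangle.mk ((ι n).app x) ((π (n + 1)).app x) (δ n x) ∈ distTriang C

/-- The cohomology functor `H^i_t := τ_{≤i} τ_{≥i} (-)[i]` associated to a t-structure
with truncations; it takes values in the heart `Ĥ`. -/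
def Truncation.H {t : TStructure C} (tr : Truncation t) (i : ℤ) : C ⥤ C :=
  tr.truncGE i ⋙ tr.truncLE i ⋙ shiftFunctor C i

/-- A t-structure (with truncations) is *compact* (Définition 2.2) if it is bounded
(compact objects have bounded amplitude), precompact (truncations preserve compact
objects), and the positive part `T̂^{≥0}` is stable under filtered colimits. -/
structure IsCompactTStructure (t : TStructure C) (tr : Truncation t) : Prop where
  bounded : ∀ x : C, IsCompactObj x → ∃ a b : ℤ, a ≤ b ∧ t.ge a x ∧ t.le b x
  precompact_le : ∀ (x : C) (n : ℤ), IsCompactObj x → IsCompactObj ((tr.truncLE n).obj x)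
  precompact_ge : ∀ (x : C) (n : ℤ), IsCompactObj x → IsCompactObj ((tr.truncGE n).obj x)
  ge_stable : ∀ (J : Type v) [SmallCategory J] [IsFiltered J] (F : J ⥤ C) (c : Cocone F),
    IsColimit c → (∀ j : J, t.ge 0 (F.obj j)) → t.ge 0 c.pt

variable (k : Type u) [Field k]

/-- Composition of shifted endomorphisms
`Hom(x, x[i]) ⊗ Hom(x, x[j]) ⟶ Hom(x, x[i+j])` (the product in the Ext-algebra). -/
def selfComp {x : C} {i j : ℤ} (f : x ⟶ x⟦i⟧) (g : x ⟶ x⟦j⟧) (l : ℤ) (h : j + i = l) :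
    x ⟶ x⟦l⟧ :=
  f ≫ (shiftFunctor C i).map g ≫ ((shiftFunctorAdd' C j i l h).inv.app x)

/-- A Serre functor for the saturated dg-category `T` of compact objects of `T̂`:
an autoequivalence with `k`-linear Serre duality on compact objects. -/
structure SerreOnCompacts [Linear k C] where
  S : C ⥤ C
  isEquivalence : S.IsEquivalence
  preserves_compact : ∀ x : C, IsCompactObj x → IsCompactObj (S.obj x)
  duality : ∀ x y : C, IsCompactObj x → IsCompactObj y →
    Nonempty ((y ⟶ S.obj x) ≃ₗ[k] ((x ⟶ y) →ₗ[k] k))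

/-- A *point object of dimension `d`* (Définition 5.1): a compact object with vanishing
negative self-Exts, whose Ext-algebra is free graded-commutative on `Ext¹(x,x)` placed
in degree one (`T(x,x) ≃ Sym_k(Ext¹(x,x)[-1])`, the exterior algebra on `Ext¹(x,x)`),
with `dim_k Ext¹(x,x) = d` and `S(x) ≅ x[d]`. -/
structure IsPointObject [Linear k C] (sd : SerreOnCompacts k (C := C)) (d : ℕ) (x : C) :
    Prop where
  compact : IsCompactObj x
  neg_ext : ∀ i : ℤ, i < 0 → ∀ f : x ⟶ x⟦i⟧, f = 0
  sym_ext_algebra :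
    ∃ e : ∀ i : ℕ, (x ⟶ x⟦(i : ℤ)⟧) ≃ₗ[k] (⋀[k]^i (x ⟶ x⟦(1 : ℤ)⟧)),
      ∀ (i j : ℕ) (f : x ⟶ x⟦(i : ℤ)⟧) (g : x ⟶ x⟦(j : ℤ)⟧),
        ((e (i + j) (selfComp f g ((i + j : ℕ) : ℤ) (by push_cast; ring)) :
            ⋀[k]^(i + j) (x ⟶ x⟦(1 : ℤ)⟧)) : ExteriorAlgebra k (x ⟶ x⟦(1 : ℤ)⟧)) =
          ((e i f : ⋀[k]^i (x ⟶ x⟦(1 : ℤ)⟧)) : ExteriorAlgebra k (x ⟶ x⟦(1 : ℤ)⟧)) *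
          ((e j g : ⋀[k]^j (x ⟶ x⟦(1 : ℤ)⟧)) : ExteriorAlgebra k (x ⟶ x⟦(1 : ℤ)⟧))
  dim_ext_one : Module.finrank k (x ⟶ x⟦(1 : ℤ)⟧) = d
  serre : Nonempty (sd.S.obj x ≅ x⟦(d : ℤ)⟧)

/-- A *point system of dimension `d`* (Définition 5.2) in the saturated dg-category `T`
of compact objects: a class of point objects of dimension `d`, pairwise orthogonal,
detecting the zero objects among compact objects. -/
structure IsPointSystem [Linear k C] (sd : SerreOnCompacts k (C := C)) (d : ℕ)
    (P : Set C) : Prop where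
  point : ∀ x ∈ P, IsPointObject k sd d x
  orthogonal : ∀ x ∈ P, ∀ y ∈ P, ¬ Nonempty (x ≅ y) →
    ∀ (i : ℤ) (f : x ⟶ y⟦i⟧), f = 0
  detect : ∀ E : C, IsCompactObj E →
    (IsZero E ↔ ∀ x ∈ P, ∀ (i : ℤ) (f : E ⟶ x⟦i⟧), f = 0)

/-- Monomorphisms in the heart `Ĥ` of a t-structure (viewed as a full subcategory). -/
def MonoInHeart (t : TStructure C) {x y : C} (f : x ⟶ y) : Prop :=
  ∀ z : C, t.le 0 z → t.ge 0 z → ∀ g h : z ⟶ x, g ≫ f = h ≫ f → g = h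

/-- The heart `Ĥ` is noetherian: every subobject (in `Ĥ`) of an ω-small object is
ω-small. -/
def NoetherianHeart (t : TStructure C) : Prop :=
  ∀ (x y : C) (f : x ⟶ y), (t.le 0 x ∧ t.ge 0 x) → (t.le 0 y ∧ t.ge 0 y) →
    MonoInHeart t f → IsCompactObj y → IsCompactObj x

/-- The point system `P` *cogenerates* the t-structure (Définition 5.4 (1)):
`E ∈ T^{≤0}` iff `H^i(T(E,x)) = 0` for all `x ∈ P` and all `i < 0`. -/
def Cogenerates (t : TStructure C) (P : Set C) : Prop :=
  ∀ E : C, IsCompactObj E →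
    (t.le 0 E ↔ ∀ x ∈ P, ∀ i : ℤ, i < 0 → ∀ f : E ⟶ x⟦i⟧, f = 0)

/-- The point system `P` *strongly cogenerates* the t-structure (Définition 5.4 (2)):
it cogenerates it, and an object `E` of the heart `H` is zero iff `[E,x] = 0` for all
`x ∈ P`. -/
def StronglyCogenerates (t : TStructure C) (P : Set C) : Prop :=
  Cogenerates t P ∧
    ∀ E : C, IsCompactObj E → t.le 0 E → t.ge 0 E →
      (IsZero E ↔ ∀ x ∈ P, ∀ f : E ⟶ x, f = 0)

/-- Simple objects of the heart `H = Ĥ ∩ [T]` of the induced t-structure on `[T]`: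
nonzero objects all of whose subobjects in `H` are `0` or everything. -/
def IsSimpleHeartObj (t : TStructure C) (x : C) : Prop :=
  IsCompactObj x ∧ t.le 0 x ∧ t.ge 0 x ∧ ¬ IsZero x ∧
    ∀ (y : C) (f : y ⟶ x), IsCompactObj y → t.le 0 y → t.ge 0 y →
      MonoInHeart t f → (IsZero y ∨ IsIso f)

/-!
Cogeneration alone lets every nonzero compact object `E` of the heart map nontrivially to a
point: `E⟦-1⟧` is not `≤ 0`, so some `E⟦-1⟧ ⟶ x⟦i⟧` with `i < 0` is nonzero, and `E ≤ 0`
forces `i = -1`. In particular strong cogeneration is automatic.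

Points lie in the heart: `x ≥ 0` because cogeneration, applied to the compact object
`(τ≤-1 x)⟦-1⟧ ≤ 0`, kills `τ≤-1 x ⟶ x`. Their endomorphism algebra is `k` (the degree-zero part
of the exterior algebra), so by orthogonality nonzero maps between points are isomorphisms.
For `f : y ⟶ x` in the heart with cone `c`, `f` is a monomorphism in the heart iff `c ≥ 0`, and
its kernel in the heart is `H⁰(c⟦-1⟧)`.

A point `x` is simple: if `y ↪ x` has nonzero cokernel `c`, a nonzero `c ⟶ z` to a point
composes to an isomorphism `x ⟶ z`, which splits `x ⟶ c`, so `y ⟶ x` vanishes. A simple `y` is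
a point: for a nonzero `f : y ⟶ x` to a point, the kernel of `f` is compact because the heart is
noetherian, hence zero by simplicity, so `f` is a monomorphism into the simple object `x`.
-/

section CompactObjects

omit [HasZeroObject C] [∀ (n : ℤ), (shiftFunctor C n).Additive] [Pretriangulated C]

variable {J : Type v} [SmallCategory J] [IsFiltered J] {F : J ⥤ C} {c : Cocone F}

omit [Preadditive C] [HasShift C ℤ] in
lemma IsCompactObj.exists_comp_eq {x : C} (hx : IsCompactObj x) (hc : IsColimit c)
    (h : x ⟶ c.pt) : ∃ (j : J) (g : x ⟶ F.obj j), g ≫ c.ι.app j = h := by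
  obtain ⟨hm⟩ := hx J F c hc
  exact Types.jointly_surjective _ hm h

omit [HasShift C ℤ] in
lemma IsCompactObj.exists_comp_map_eq_zero {x : C} (hx : IsCompactObj x) (hc : IsColimit c)
    {j : J} (g : x ⟶ F.obj j) (hg : g ≫ c.ι.app j = 0) :
    ∃ (l : J) (e : j ⟶ l), g ≫ F.map e = 0 := by
  obtain ⟨hm⟩ := hx J F c hc
  have h : ((coyoneda.obj (Opposite.op x)).mapCocone c).ι.app j g =
      ((coyoneda.obj (Opposite.op x)).mapCocone c).ι.app j (0 : x ⟶ F.obj j) := by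
    simpa using hg
  obtain ⟨l, e₁, e₂, he⟩ := (Types.FilteredColimit.isColimit_eq_iff _ hm).1 h
  refine ⟨IsFiltered.coeq e₁ e₂, e₁ ≫ IsFiltered.coeqHom e₁ e₂, ?_⟩
  have he : g ≫ F.map e₁ = 0 := by simpa using he
  rw [F.map_comp, reassoc_of% he, zero_comp]

omit [HasShift C ℤ] in
lemma isCompactObj_of_exists {x : C}
    (hsurj : ∀ (J : Type v) [SmallCategory J] [IsFiltered J] (F : J ⥤ C) (c : Cocone F),
      IsColimit c → ∀ h : x ⟶ c.pt, ∃ (j : J) (g : x ⟶ F.obj j), g ≫ c.ι.app j = h)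
    (hinj : ∀ (J : Type v) [SmallCategory J] [IsFiltered J] (F : J ⥤ C) (c : Cocone F),
      IsColimit c → ∀ (j : J) (g : x ⟶ F.obj j), g ≫ c.ι.app j = 0 →
        ∃ (l : J) (e : j ⟶ l), g ≫ F.map e = 0) :
    IsCompactObj x := by
  intro J _ _ F c hc
  refine ⟨Types.FilteredColimit.isColimitOf _ _ (fun h ↦ ?_) (fun i j gi gj hij ↦ ?_)⟩
  · obtain ⟨j, g, hg⟩ := hsurj J F c hc h
    exact ⟨j, g, hg.symm⟩
  · obtain ⟨l, e, he⟩ := hinj J F c hc (IsFiltered.max i j)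
      (gi ≫ F.map (IsFiltered.leftToMax i j) - gj ≫ F.map (IsFiltered.rightToMax i j))
      (by simpa [sub_eq_zero] using hij)
    refine ⟨l, IsFiltered.leftToMax i j ≫ e, IsFiltered.rightToMax i j ≫ e, ?_⟩
    simpa [sub_eq_zero] using he

omit [Preadditive C] in
lemma IsCompactObj.shift {x : C} (hx : IsCompactObj x) (n : ℤ) : IsCompactObj (x⟦n⟧) := by
  intro J _ _ F c hc
  obtain ⟨h⟩ := hx J _ _ (isColimitOfPreserves (shiftFunctor C (-n)) hc)
  exact ⟨(IsColimit.mapCoconeEquiv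
    (((shiftEquiv C n).toAdjunction.compCoyonedaIso).app (Opposite.op x)).symm h)⟩

end CompactObjects

section DistinguishedTriangles

variable {J : Type v} [SmallCategory J] [IsFiltered J] {F : J ⥤ C} {c : Cocone F}
  (T : Triangle C) (hT : T ∈ distTriang C)
include hT

lemma Triangle.yoneda_exact₁ {X : C} (f : T.obj₁⟦(1 : ℤ)⟧ ⟶ X) (hf : T.mor₃ ≫ f = 0) :
    ∃ g : T.obj₂⟦(1 : ℤ)⟧ ⟶ X, f = T.mor₁⟦(1 : ℤ)⟧' ≫ g := by
  obtain ⟨g, hg⟩ : ∃ g : T.obj₂⟦(1 : ℤ)⟧ ⟶ X, f = T.rotate.mor₃ ≫ g :=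
    Triangle.yoneda_exact₃ _ (rot_of_distTriang _ hT) f hf
  exact ⟨-g, hg.trans ((Preadditive.neg_comp _ _).trans (Preadditive.comp_neg _ _).symm)⟩

lemma exists_comp_eq_of_distTriang (h₁ : IsCompactObj T.obj₁) (h₂ : IsCompactObj T.obj₂)
    (hc : IsColimit c) (h : T.obj₃ ⟶ c.pt) :
    ∃ (j : J) (g : T.obj₃ ⟶ F.obj j), g ≫ c.ι.app j = h := by
  obtain ⟨j, β, hβ⟩ := h₂.exists_comp_eq hc (T.mor₂ ≫ h)
  obtain ⟨l, e, he⟩ := h₁.exists_comp_map_eq_zero hc (T.mor₁ ≫ β) (by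
    rw [Category.assoc, hβ, comp_distTriang_mor_zero₁₂_assoc _ hT, zero_comp])
  obtain ⟨γ, hγ⟩ := Triangle.yoneda_exact₂ T hT (β ≫ F.map e) (by simpa using he)
  obtain ⟨ε, hε⟩ := Triangle.yoneda_exact₃ T hT ((γ ≫ c.ι.app l : T.obj₃ ⟶ c.pt) - h) (by
    rw [Preadditive.comp_sub, ← reassoc_of% hγ, c.w, hβ, sub_self])
  obtain ⟨m, ε', hε'⟩ := (h₁.shift 1).exists_comp_eq hc ε
  refine ⟨IsFiltered.max l m, γ ≫ F.map (IsFiltered.leftToMax l m) -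
    T.mor₃ ≫ ε' ≫ F.map (IsFiltered.rightToMax l m), ?_⟩
  simp only [Preadditive.sub_comp, Category.assoc, c.w, hε', ← hε]
  exact sub_sub_cancel _ _

lemma exists_comp_map_eq_zero_of_distTriang (h₂ : IsCompactObj T.obj₂)
    (h₁' : IsCompactObj (T.obj₁⟦(1 : ℤ)⟧)) (h₂' : IsCompactObj (T.obj₂⟦(1 : ℤ)⟧))
    (hc : IsColimit c) {j : J} (g : T.obj₃ ⟶ F.obj j) (hg : g ≫ c.ι.app j = 0) :
    ∃ (l : J) (e : j ⟶ l), g ≫ F.map e = 0 := by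
  obtain ⟨l, e, he⟩ := h₂.exists_comp_map_eq_zero hc (T.mor₂ ≫ g) (by
    rw [Category.assoc, hg, comp_zero])
  obtain ⟨ε, hε⟩ := Triangle.yoneda_exact₃ T hT (g ≫ F.map e) (by simpa using he)
  obtain ⟨ψ, hψ⟩ := Triangle.yoneda_exact₁ T hT (ε ≫ c.ι.app l : T.obj₁⟦(1 : ℤ)⟧ ⟶ c.pt)
    (by rw [← reassoc_of% hε, c.w, hg])
  obtain ⟨m, ψ', hψ'⟩ := h₂'.exists_comp_eq hc ψ
  obtain ⟨n, e', he'⟩ := h₁'.exists_comp_map_eq_zero hc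
    (ε ≫ F.map (IsFiltered.leftToMax l m) -
      T.mor₁⟦(1 : ℤ)⟧' ≫ ψ' ≫ F.map (IsFiltered.rightToMax l m)) (by
    simp only [Preadditive.sub_comp, Category.assoc, c.w, hψ', hψ, sub_self])
  refine ⟨n, e ≫ IsFiltered.leftToMax l m ≫ e', ?_⟩
  rw [Preadditive.sub_comp, sub_eq_zero] at he'
  simp only [Functor.map_comp, reassoc_of% hε, Category.assoc] at he' ⊢
  rw [he', comp_distTriang_mor_zero₃₁_assoc _ hT, zero_comp]

lemma isCompactObj₃_of_distTriang (h₁ : IsCompactObj T.obj₁) (h₂ : IsCompactObj T.obj₂) :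
    IsCompactObj T.obj₃ :=
  isCompactObj_of_exists (fun _ _ _ _ _ hc ↦ exists_comp_eq_of_distTriang T hT h₁ h₂ hc)
    (fun _ _ _ _ _ hc _ ↦ exists_comp_map_eq_zero_of_distTriang T hT h₂ (h₁.shift 1)
      (h₂.shift 1) hc)

end DistinguishedTriangles

section Truncations

variable {t : TStructure C}

lemma Truncation.ge_of_ι_app_eq_zero (tr : Truncation t) {n : ℤ} {X : C}
    (h : (tr.ι n).app X = 0) : t.ge (n + 1) X := by
  rw [t.ge_iff_isGE, t.isGE_iff_orthogonal n (n + 1) rfl]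
  intro Y f hY
  obtain ⟨g, rfl⟩ := Triangle.coyoneda_exact₂ _ (tr.triangle_mem n X) f
    (t.zero_of_isLE_of_isGE _ n (n + 1) (by omega) hY ⟨tr.truncGE_ge _ _⟩)
  exact (congrArg (g ≫ ·) h).trans comp_zero

lemma isGE_of_truncLTι_app_eq_zero {n : ℤ} {X : C} (h : (t.truncLTι n).app X = 0) :
    t.IsGE X n := by
  rw [t.isGE_iff_isZero_truncLT_obj, IsZero.iff_id_eq_zero]
  exact t.to_truncLT_obj_ext (by rw [h, comp_zero, zero_comp])

lemma isGE_truncLT_obj_of_isGE {n : ℤ} {X : C} (hX : t.IsGE X n) :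
    t.IsGE ((t.truncLT (n + 1)).obj X) n := by
  have h := t.isGE_shift ((t.truncGE (n + 1)).obj X) (n + 1) (-1) (n + 2)
  exact t.isGE₂ _ (inv_rot_of_distTriang _ (t.triangleLTGE_distinguished (n + 1) X)) n
    ⟨t.ge_antitone (by omega) _ h.ge⟩ hX

end Truncations

section Heart

variable {t : TStructure C}

lemma MonoInHeart.eq_zero_of_comp_eq_zero {X Y : C} {f : X ⟶ Y} (hf : MonoInHeart t f)
    {Z : C} (hZ₁ : t.le 0 Z) (hZ₂ : t.ge 0 Z) {g : Z ⟶ X} (hg : g ≫ f = 0) : g = 0 :=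
  hf Z hZ₁ hZ₂ g 0 (by rw [hg, zero_comp])

lemma monoInHeart_of_cancel_zero {X Y : C} {f : X ⟶ Y}
    (hf : ∀ Z : C, t.le 0 Z → t.ge 0 Z → ∀ g : Z ⟶ X, g ≫ f = 0 → g = 0) :
    MonoInHeart t f := fun Z hZ₁ hZ₂ g h hgh ↦
  sub_eq_zero.1 (hf Z hZ₁ hZ₂ (g - h) (by rw [Preadditive.sub_comp, hgh, sub_self]))

variable (T : Triangle C) (hT : T ∈ distTriang C)
include hT

lemma le_obj₃_of_distTriang {n : ℤ} (h₁ : t.le (n + 1) T.obj₁) (h₂ : t.le n T.obj₂) :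
    t.le n T.obj₃ :=
  (t.isLE₂ _ (rot_of_distTriang _ hT) n ⟨h₂⟩ ⟨t.le_shift (n + 1) 1 n (by omega) _ h₁⟩).le

lemma ge_obj₃_of_distTriang {n : ℤ} (h₁ : t.ge (n + 1) T.obj₁) (h₂ : t.ge n T.obj₂) :
    t.ge n T.obj₃ :=
  (t.isGE₂ _ (rot_of_distTriang _ hT) n ⟨h₂⟩ ⟨t.ge_shift (n + 1) 1 n (by omega) _ h₁⟩).ge

lemma monoInHeart_mor₁_of_ge_obj₃ (h₃ : t.ge 0 T.obj₃) : MonoInHeart t T.mor₁ := by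
  refine monoInHeart_of_cancel_zero fun Z hZ _ g hg ↦ ?_
  obtain ⟨s, rfl⟩ := Triangle.coyoneda_exact₂ _ (inv_rot_of_distTriang _ hT) g hg
  rw [t.zero_of_isLE_of_isGE s 0 1 (by omega) ⟨hZ⟩
    ⟨t.ge_shift 0 (-1) 1 (by omega) _ h₃⟩, zero_comp]
  rfl

lemma eq_zero_of_mor₂_comp_eq_zero {n : ℤ} (h₁ : t.le n T.obj₁) {Z : C} (hZ : t.ge n Z)
    {g : T.obj₃ ⟶ Z} (hg : T.mor₂ ≫ g = 0) : g = 0 := by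
  obtain ⟨ψ, rfl⟩ := Triangle.yoneda_exact₃ T hT g hg
  rw [t.zero_of_isLE_of_isGE ψ (n - 1) n (by omega)
    ⟨t.le_shift n 1 (n - 1) (by omega) _ h₁⟩ ⟨hZ⟩, comp_zero]

end Heart

section HeartKernel

variable (t : TStructure C) (T : Triangle C)

/-- For `T.obj₁`, `T.obj₂` in the heart, `H⁰(T.obj₃⟦-1⟧) ⟶ T.obj₁` is the kernel of `T.mor₁`
in the heart. -/
noncomputable abbrev heartKer : C := (t.truncLT 1).obj (T.obj₃⟦(-1 : ℤ)⟧)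

noncomputable def heartKerι : heartKer t T ⟶ T.obj₁ :=
  (t.truncLTι 1).app _ ≫ T.invRotate.mor₁

variable {t T} (hT : T ∈ distTriang C)
include hT

lemma heartKerι_comp_mor₁ : heartKerι t T ≫ T.mor₁ = 0 :=
  (Category.assoc _ _ _).trans
    ((congrArg _ (comp_distTriang_mor_zero₁₂ _ (inv_rot_of_distTriang _ hT))).trans comp_zero)

lemma ge_heartKer (h₁ : t.ge 0 T.obj₁) (h₂ : t.ge (-1) T.obj₂) : t.ge 0 (heartKer t T) :=
  (isGE_truncLT_obj_of_isGE (n := 0)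
    ⟨t.ge_shift (-1) (-1) 0 (by omega) _ (ge_obj₃_of_distTriang T hT (n := -1) h₁ h₂)⟩).ge

lemma comp_truncLTι_eq_zero_of_comp_heartKerι_eq_zero (h₂ : t.ge 0 T.obj₂) {Z : C}
    (hZ : t.le 0 Z) {g : Z ⟶ heartKer t T} (hg : g ≫ heartKerι t T = 0) :
    g ≫ (t.truncLTι 1).app _ = 0 := by
  obtain ⟨s, hs⟩ := Triangle.coyoneda_exact₂ _
    (inv_rot_of_distTriang _ (inv_rot_of_distTriang _ hT)) (g ≫ (t.truncLTι 1).app _)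
    ((Category.assoc _ _ _).trans hg)
  refine hs.trans ?_
  rw [t.zero_of_isLE_of_isGE s 0 1 (by omega) ⟨hZ⟩
    ⟨t.ge_shift 0 (-1) 1 (by omega) _ h₂⟩, zero_comp]
  rfl

lemma monoInHeart_heartKerι (h₂ : t.ge 0 T.obj₂) : MonoInHeart t (heartKerι t T) := by
  refine monoInHeart_of_cancel_zero fun Z hZ _ g hg ↦ ?_
  have : t.IsLE Z (1 - 1) := ⟨hZ⟩
  exact t.to_truncLT_obj_ext (by
    rw [comp_truncLTι_eq_zero_of_comp_heartKerι_eq_zero hT h₂ hZ hg, zero_comp])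

lemma ge_obj₃_of_heartKerι_eq_zero (h₂ : t.ge 0 T.obj₂) (h : heartKerι t T = 0) :
    t.ge 0 T.obj₃ := by
  have hι := comp_truncLTι_eq_zero_of_comp_heartKerι_eq_zero hT h₂
    (t.isLE_truncLT_obj _ 1 0).le (g := 𝟙 _) (by rw [h, comp_zero])
  rw [Category.id_comp] at hι
  exact ((t.isGE_shift_iff T.obj₃ 0 (-1) 1).1 (isGE_of_truncLTι_app_eq_zero hι)).ge

lemma ge_obj₃_of_monoInHeart (h₁ : t.ge 0 T.obj₁) (h₂ : t.ge 0 T.obj₂)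
    (hf : MonoInHeart t T.mor₁) : t.ge 0 T.obj₃ :=
  ge_obj₃_of_heartKerι_eq_zero hT h₂ (hf.eq_zero_of_comp_eq_zero (t.isLE_truncLT_obj _ 1 0).le
    (ge_heartKer hT h₁ (t.ge_antitone (by omega) _ h₂)) (heartKerι_comp_mor₁ hT))

end HeartKernel

section Cogeneration

variable {t : TStructure C} {P : Set C}

omit [HasZeroObject C] [Pretriangulated C] in
lemma exists_ne_zero_hom_shift {X Y : C} {i j : ℤ} (h : i + 1 = j)
    {f : X⟦(-1 : ℤ)⟧ ⟶ Y⟦i⟧} (hf : f ≠ 0) : ∃ g : X ⟶ Y⟦j⟧, g ≠ 0 :=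
  ⟨(shiftFunctorCompIsoId C (-1) 1 (by omega)).inv.app X ≫ f⟦(1 : ℤ)⟧' ≫
    (shiftFunctorAdd' C i 1 j h).inv.app Y, by simpa [Functor.map_eq_zero_iff] using hf⟩

lemma Cogenerates.exists_ne_zero_hom (hcog : Cogenerates t P) {E : C} (hE : IsCompactObj E)
    (h₁ : t.le 0 E) (h₂ : t.ge 0 E) (hE₀ : ¬ IsZero E) : ∃ x ∈ P, ∃ f : E ⟶ x, f ≠ 0 := by
  have hE' : ¬ t.le 0 (E⟦(-1 : ℤ)⟧) := fun h ↦ by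
    have : t.IsLE (E⟦(-1 : ℤ)⟧) 0 := ⟨h⟩
    have : t.IsLE E (-1) := t.isLE_of_shift E (-1) (-1) 0
    have : t.IsGE E 0 := ⟨h₂⟩
    exact hE₀ (t.isZero E (-1) 0)
  rw [hcog _ (hE.shift (-1))] at hE'
  push Not at hE'
  obtain ⟨x, hx, i, hi, f, hf⟩ := hE'
  obtain rfl : i = -1 := by
    by_contra hi'
    obtain ⟨g, hg⟩ := exists_ne_zero_hom_shift rfl hf
    exact hg ((hcog E hE).1 h₁ x hx (i + 1) (by omega) g)
  obtain ⟨g, hg⟩ := exists_ne_zero_hom_shift (j := 0) (by omega) hf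
  exact ⟨x, hx, g ≫ (shiftFunctorZero C ℤ).hom.app x, by simpa using hg⟩

lemma stronglyCogenerates_of_cogenerates (hcog : Cogenerates t P) :
    StronglyCogenerates t P :=
  ⟨hcog, fun _ hE h₁ h₂ ↦ ⟨fun hE₀ _ _ f ↦ hE₀.eq_of_src f 0, fun h ↦ by
    by_contra hE₀
    obtain ⟨x, hx, f, hf⟩ := hcog.exists_ne_zero_hom hE h₁ h₂ hE₀
    exact hf (h x hx f)⟩⟩

end Cogeneration

section PointObjects

variable {k} [Linear k C] {sd : SerreOnCompacts k (C := C)} {d : ℕ}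

section

omit [HasZeroObject C] [∀ (n : ℤ), (shiftFunctor C n).Additive] [Pretriangulated C]

lemma IsPointObject.finrank_endomorphisms {x : C} (hx : IsPointObject k sd d x) :
    Module.finrank k (x ⟶ x) = 1 := by
  obtain ⟨e, -⟩ := hx.sym_ext_algebra
  calc Module.finrank k (x ⟶ x)
      = Module.finrank k (x ⟶ x⟦((0 : ℕ) : ℤ)⟧) :=
        (Linear.homCongr k (Iso.refl x)
          ((shiftFunctorZero' C ((0 : ℕ) : ℤ) rfl).app x).symm).finrank_eq
    _ = Module.finrank k (⋀[k]^0 (x ⟶ x⟦(1 : ℤ)⟧)) := (e 0).finrank_eq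
    _ = 1 := (exteriorPower.zeroEquiv k _).finrank_eq.trans (Module.finrank_self k)

lemma IsPointObject.not_isZero {x : C} (hx : IsPointObject k sd d x) : ¬ IsZero x := by
  intro h
  have : Subsingleton (x ⟶ x) := ⟨h.eq_of_src⟩
  simpa [Module.finrank_zero_of_subsingleton] using hx.finrank_endomorphisms

lemma IsPointObject.isIso_of_ne_zero {x : C} (hx : IsPointObject k sd d x) {φ : x ⟶ x}
    (hφ : φ ≠ 0) : IsIso φ := by
  have hid : 𝟙 x ≠ 0 := fun h ↦ hx.not_isZero ((IsZero.iff_id_eq_zero x).2 h)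
  obtain ⟨a, rfl⟩ := (finrank_eq_one_iff_of_nonzero' _ hid).1 hx.finrank_endomorphisms φ
  have ha : a ≠ 0 := by rintro rfl; exact hφ (zero_smul k _)
  exact ⟨a⁻¹ • 𝟙 x, by simp [smul_smul, ha], by simp [smul_smul, ha]⟩

variable {P : Set C}

lemma IsPointSystem.isIso_of_ne_zero (hP : IsPointSystem k sd d P) {x z : C} (hx : x ∈ P)
    (hz : z ∈ P) {φ : x ⟶ z} (hφ : φ ≠ 0) : IsIso φ := by
  obtain ⟨e⟩ : Nonempty (x ≅ z) := by
    by_contra he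
    apply hφ
    simpa using hP.orthogonal x hx z hz he 0 (φ ≫ (shiftFunctorZero C ℤ).inv.app z)
  have : IsIso (φ ≫ e.inv) := (hP.point x hx).isIso_of_ne_zero (by simpa using hφ)
  simpa using (inferInstance : IsIso ((φ ≫ e.inv) ≫ e.hom))

end

variable {P : Set C} {t : TStructure C}

lemma IsPointSystem.le_zero_of_mem (hP : IsPointSystem k sd d P) (hcog : Cogenerates t P) {x : C}
    (hx : x ∈ P) : t.le 0 x := by
  rw [hcog x (hP.point x hx).compact]
  intro z hz i hi f
  by_cases he : Nonempty (x ≅ z)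
  · obtain ⟨e⟩ := he
    simpa using (hP.point x hx).neg_ext i hi (f ≫ e.inv⟦i⟧')
  · exact hP.orthogonal x hx z hz he i f

lemma IsPointSystem.ge_zero_of_mem {tr : Truncation t} (hperf : IsCompactTStructure t tr)
    (hP : IsPointSystem k sd d P) (hcog : Cogenerates t P) {x : C} (hx : x ∈ P) :
    t.ge 0 x := by
  have hτ : t.le 0 (((tr.truncLE (-1)).obj x)⟦(-1 : ℤ)⟧) :=
    t.le_shift (-1) (-1) 0 (by omega) _ (tr.truncLE_le (-1) x)
  have hι : ((tr.ι (-1)).app x)⟦(-1 : ℤ)⟧' = 0 :=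
    (hcog _ ((hperf.precompact_le x (-1) (hP.point x hx).compact).shift (-1))).1 hτ
      x hx (-1) (by omega) _
  simpa using tr.ge_of_ι_app_eq_zero ((Functor.map_eq_zero_iff _).1 hι)

end PointObjects

section Simples

variable {k} [Linear k C] {sd : SerreOnCompacts k (C := C)} {d : ℕ} {P : Set C}
  {t : TStructure C} {tr : Truncation t}

lemma IsPointSystem.isSimpleHeartObj_of_mem (hperf : IsCompactTStructure t tr)
    (hP : IsPointSystem k sd d P) (hcog : Cogenerates t P) {x : C} (hx : x ∈ P) :
    IsSimpleHeartObj t x := by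
  have hxle := hP.le_zero_of_mem hcog hx
  have hxge := hP.ge_zero_of_mem hperf hcog hx
  refine ⟨(hP.point x hx).compact, hxle, hxge, (hP.point x hx).not_isZero, ?_⟩
  intro y f hyc hyle hyge hf
  obtain ⟨c, p, q, hT⟩ := distinguished_cocone_triangle f
  have hcge := ge_obj₃_of_monoInHeart hT hyge hxge hf
  by_cases hc : IsZero c
  · exact Or.inr ((Triangle.isZero₃_iff_isIso₁ _ hT).1 hc)
  obtain ⟨z, hz, g, hg⟩ : ∃ z ∈ P, ∃ g : c ⟶ z, g ≠ 0 := hcog.exists_ne_zero_hom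
    (isCompactObj₃_of_distTriang _ hT hyc (hP.point x hx).compact)
    (le_obj₃_of_distTriang _ hT (t.le_monotone (by omega) _ hyle) hxle) hcge hc
  have hpg : IsIso (p ≫ g) := hP.isIso_of_ne_zero hx hz fun h ↦
    hg (eq_zero_of_mor₂_comp_eq_zero _ hT hyle (hP.ge_zero_of_mem hperf hcog hz) h)
  have hf₀ : f = 0 := by
    rw [← Preadditive.IsIso.comp_right_eq_zero _ (p ≫ g), ← Category.assoc,
      show f ≫ p = 0 from comp_distTriang_mor_zero₁₂ _ hT, zero_comp]
  exact Or.inl ((IsZero.iff_id_eq_zero y).2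
    (hf.eq_zero_of_comp_eq_zero hyle hyge (by rw [hf₀, comp_zero])))

lemma IsPointSystem.exists_iso_of_isSimpleHeartObj (hperf : IsCompactTStructure t tr)
    (hnoeth : NoetherianHeart t) (hP : IsPointSystem k sd d P) (hcog : Cogenerates t P)
    {y : C} (hy : IsSimpleHeartObj t y) : ∃ x ∈ P, Nonempty (y ≅ x) := by
  obtain ⟨hyc, hyle, hyge, hy₀, hsimple⟩ := hy
  obtain ⟨x, hx, f, hf⟩ := hcog.exists_ne_zero_hom hyc hyle hyge hy₀
  have hxge := hP.ge_zero_of_mem hperf hcog hx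
  obtain ⟨c, p, q, hT⟩ := distinguished_cocone_triangle f
  have hKle : t.le 0 (heartKer t (Triangle.mk f p q)) := (t.isLE_truncLT_obj _ 1 0).le
  have hKge := ge_heartKer hT hyge (t.ge_antitone (by omega) _ hxge)
  have hκ := monoInHeart_heartKerι hT hxge
  rcases hsimple _ _ (hnoeth _ _ _ ⟨hKle, hKge⟩ ⟨hyle, hyge⟩ hκ hyc) hKle hKge hκ with hK | hκiso
  · have hfmono := monoInHeart_mor₁_of_ge_obj₃ _ hT
      (ge_obj₃_of_heartKerι_eq_zero hT hxge (hK.eq_of_src _ _))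
    obtain ⟨-, -, -, -, hxsimple⟩ := hP.isSimpleHeartObj_of_mem hperf hcog hx
    rcases hxsimple y f hyc hyle hyge hfmono with hy | hfiso
    · exact absurd hy hy₀
    · exact ⟨x, hx, ⟨asIso f⟩⟩
  · exact (hf ((Preadditive.IsIso.comp_left_eq_zero _ _).1 (heartKerι_comp_mor₁ (t := t) hT))).elim

end Simples

theorem strongly_cogenerates_iff_simples
    [Linear k C]
    (sd : SerreOnCompacts k (C := C))
    -- a perfect t-structure: compact, with noetherian heart
    (t : TStructure C) (tr : Truncation t)
    (hperf₁ : IsCompactTStructure t tr) (hperf₂ : NoetherianHeart t)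
    -- a point system of dimension `d` cogenerating the t-structure
    (d : ℕ) (P : Set C) (hP : IsPointSystem k sd d P)
    (hcog : Cogenerates t P) :
    StronglyCogenerates t P ↔
      ((∀ x ∈ P, IsSimpleHeartObj t x) ∧
        ∀ y : C, IsSimpleHeartObj t y → ∃ x ∈ P, Nonempty (y ≅ x)) :=
  ⟨fun _ ↦ ⟨fun _ hx ↦ hP.isSimpleHeartObj_of_mem hperf₁ hcog hx,
      fun _ hy ↦ hP.exists_iso_of_isSimpleHeartObj hperf₁ hperf₂ hcog hy⟩,
    fun _ ↦ stronglyCogenerates_of_cogenerates hcog⟩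

end TV
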